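/- arXiv:2510.25127 — 2 statements merged into one kernel-verified Lean document; each statement's English description precedes it below -/
import Mathlib

section
/- Let S = (I, M, O) be a correlation scenario and let M' = (M'_i)_{i∈I}, M'' = (M''_i)_{i∈I} be collections of subsets of inputs, M'_i, M''_i ⊆ M_i. Then: (i) if M''_i ⊆ M'_i for all i ∈ I, then PP(S, M') ⊆ PP(S, M''); and (ii) PP(S, M') = PP(S, M'') if and only if M'_i = M''_i for all i ∈ I. -/
open scoped Classical
open MeasureTheory

noncomputable section

/-- A correlation scenario `S = (I, M, O)`: a finite set `I` of parties, for each party `i`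
a finite nonempty set `M i` of inputs, and for each input `x : M i` a finite set `O i x`
of outputs with at least two elements. -/
structure Scenario where
  I : Type
  M : I → Type
  O : (i : I) → M i → Type
  fI : Fintype I
  fM : ∀ i, Fintype (M i)
  fO : ∀ i x, Fintype (O i x)
  hM : ∀ i, Nonempty (M i)
  hO : ∀ i x, 2 ≤ Fintype.card (O i x)

attribute [instance] Scenario.fI Scenario.fM Scenario.fO Scenario.hM

instance Scenario.instNonemptyO (S : Scenario) (i : S.I) (x : S.M i) : Nonempty (S.O i x) :=
  Fintype.card_pos_iff.mp (by have := S.hO i x; omega)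

/-- Input strings of a scenario. -/
abbrev InputString (S : Scenario) := ∀ i, S.M i

/-- Output strings for a given input string. -/
abbrev OutputString (S : Scenario) (x : InputString S) := ∀ i, S.O i (x i)

/-- The ambient real vector space with one coordinate `℘(a|x)` for each pair of an input
string `x` and an output string `a`. -/
abbrev Behaviour (S : Scenario) := (x : InputString S) → OutputString S x → ℝ

/-- `p` is a behaviour: each `p x` is a probability distribution on output strings. -/
def IsBehaviour (S : Scenario) (p : Behaviour S) : Prop :=
  (∀ x a, 0 ≤ p x a) ∧ ∀ x, ∑ a, p x a = 1

/-- The marginal `℘(a_V | x)` of a behaviour on the set `V` of parties, evaluated at the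
restriction of `a` to `V`. -/
def marg (S : Scenario) (p : Behaviour S) (x : InputString S) (V : Set S.I)
    (a : OutputString S x) : ℝ :=
  ∑ b : OutputString S x, if ∀ i ∈ V, b i = a i then p x b else 0

/-- No-signalling: replacing the input of party `i` (all other inputs fixed) leaves the
marginal on `I ∖ {i}` unchanged. -/
def NoSignalling (S : Scenario) (p : Behaviour S) : Prop :=
  ∀ (i : S.I) (x : InputString S) (m : S.M i)
    (a : OutputString S x) (a' : OutputString S (Function.update x i m)),
    (∀ j, j ≠ i → HEq (a j) (a' j)) →
    marg S p x {i}ᶜ a = marg S p (Function.update x i m) {i}ᶜ a'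

/-- The set `NS(S)` of no-signalling behaviours. -/
def NSset (S : Scenario) : Set (Behaviour S) :=
  {p | IsBehaviour S p ∧ NoSignalling S p}

/-- A behaviour is predictable if all its probabilities are `0` or `1`. -/
def Predictable (S : Scenario) (p : Behaviour S) : Prop :=
  ∀ x a, p x a = 0 ∨ p x a = 1

/-- The set `P_NS(S)` of predictable no-signalling behaviours. -/
def PNS (S : Scenario) : Set (Behaviour S) :=
  {p | IsBehaviour S p ∧ NoSignalling S p ∧ Predictable S p}

/-- The Bell-local polytope `B(S) = conv(P_NS(S))`. -/
def BellSet (S : Scenario) : Set (Behaviour S) :=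
  convexHull ℝ (PNS S)

/-- `F_x = {i : x i ∈ M' i}`, the context-dependent set of parties choosing an input in the
distinguished collection `M'`. -/
def Fup (S : Scenario) (M' : ∀ i, Set (S.M i)) (x : InputString S) : Set S.I :=
  {i | x i ∈ M' i}

/-- Partial predictability w.r.t. the collection `M'`: every marginal on a subset of `F_x`
is `{0,1}`-valued. -/
def PartPredictable (S : Scenario) (M' : ∀ i, Set (S.M i)) (p : Behaviour S) : Prop :=
  ∀ (x : InputString S) (V : Set S.I), V ⊆ Fup S M' x →
    ∀ a, marg S p x V a = 0 ∨ marg S p x V a = 1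

/-- The set `PP(S, M')` of behaviours partially predictable w.r.t. `M'`. -/
def PPset (S : Scenario) (M' : ∀ i, Set (S.M i)) : Set (Behaviour S) :=
  {p | IsBehaviour S p ∧ PartPredictable S M' p}

/-- The set `PP_NS(S, M')` of partially predictable no-signalling behaviours. -/
def PPNS (S : Scenario) (M' : ∀ i, Set (S.M i)) : Set (Behaviour S) :=
  {p | IsBehaviour S p ∧ NoSignalling S p ∧ PartPredictable S M' p}

/-- The partially deterministic polytope `PD(S, M') = conv(PP_NS(S, M'))`. -/
def PD (S : Scenario) (M' : ∀ i, Set (S.M i)) : Set (Behaviour S) :=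
  convexHull ℝ (PPNS S M')

/-- The restricted scenario `S_{|M'}`: parties `{i : M' i ≠ ∅}`, input sets `M' i`, same
output sets. -/
def Scenario.restrict (S : Scenario) (M' : ∀ i, Set (S.M i)) : Scenario where
  I := {i : S.I // (M' i).Nonempty}
  M := fun i => ↥(M' i.1)
  O := fun i x => S.O i.1 x.1
  fI := Subtype.fintype _
  fM := fun i => (Set.toFinite (M' i.1)).fintype
  fO := fun i x => S.fO i.1 x.1
  hM := fun i => i.2.to_subtype
  hO := fun i x => S.hO i.1 x.1

/-- A bipartition `(S_{|M'}, S_{|M'^⊥})` is nonredundant unless `M'` is everything or nothing. -/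
def Nonredundant (S : Scenario) (M' : ∀ i, Set (S.M i)) : Prop :=
  ¬ (∀ i, M' i = Set.univ) ∧ ¬ (∀ i, M' i = (∅ : Set (S.M i)))

/-- Extension of an input string of `S` to an input string of the restricted scenario
`S_{|M'}` (choosing arbitrary inputs for the parties `i` with `x i ∉ M' i`). -/
def extendInput (S : Scenario) (M' : ∀ i, Set (S.M i)) (x : InputString S) :
    InputString (S.restrict M') :=
  fun i => if h : x i.1 ∈ M' i.1 then ⟨x i.1, h⟩ else ⟨i.2.some, i.2.some_mem⟩

/-- Extension of an output string of `S` to an output string of the restricted scenario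
`S_{|M'}` at the extended input string. -/
def extendOutput (S : Scenario) (M' : ∀ i, Set (S.M i)) (x : InputString S)
    (a : OutputString S x) : OutputString (S.restrict M') (extendInput S M' x) :=
  fun i =>
    if h : x i.1 ∈ M' i.1 then
      cast (congrArg (S.O i.1)
        (show x i.1 = (extendInput S M' x i).1 by simp [extendInput, h]))
        (a i.1)
    else Classical.arbitrary _

/-- The behaviour product `℘' ⊙ ℘'^⊥` of behaviours on the two halves `S' = S_{|M'}` and
`S'^⊥ = S_{|M'^⊥}` of a disjoint bipartition of `S`:
`(℘'⊙℘'^⊥)(a|x) = ℘'(a_{F_x}|x_{F_x}) · ℘'^⊥(a_{I∖F_x}|x_{I∖F_x})`, the factors being the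
corresponding marginals (well defined for no-signalling behaviours). -/
def bprod (S : Scenario) (M' : ∀ i, Set (S.M i))
    (p' : Behaviour (S.restrict M'))
    (p'' : Behaviour (S.restrict fun i => (M' i)ᶜ)) :
    Behaviour S :=
  fun x a =>
    marg (S.restrict M') p' (extendInput S M' x)
        {i : (S.restrict M').I | x i.1 ∈ M' i.1} (extendOutput S M' x a) *
    marg (S.restrict fun i => (M' i)ᶜ) p'' (extendInput S (fun i => (M' i)ᶜ) x)
        {i : (S.restrict fun i => (M' i)ᶜ).I | x i.1 ∈ (M' i.1)ᶜ}
        (extendOutput S (fun i => (M' i)ᶜ) x a)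

/-- The product `K' ⊙ K''` of two sets of behaviours on the halves of a bipartition. -/
def bprodSet (S : Scenario) (M' : ∀ i, Set (S.M i))
    (K' : Set (Behaviour (S.restrict M')))
    (K'' : Set (Behaviour (S.restrict fun i => (M' i)ᶜ))) :
    Set (Behaviour S) :=
  Set.image2 (bprod S M') K' K''

end

noncomputable section

namespace PPaux

variable (S : Scenario)

/-- Factor function: uniform at the distinguished pair `(i, m)`, point mass otherwise. -/
def g (i : S.I) (m : S.M i) (j : S.I) (y : S.M j) (b : S.O j y) : ℝ :=
  if (⟨j, y⟩ : Σ k, S.M k) = ⟨i, m⟩ then (Fintype.card (S.O j y) : ℝ)⁻¹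
  else if b = Classical.arbitrary _ then 1 else 0

lemma g_nonneg (i : S.I) (m : S.M i) (j : S.I) (y : S.M j) (b : S.O j y) :
    0 ≤ g S i m j y b := by
  unfold g
  split
  · positivity
  · split <;> norm_num

lemma g_sum (i : S.I) (m : S.M i) (j : S.I) (y : S.M j) :
    ∑ b, g S i m j y b = 1 := by
  unfold g
  split
  · rw [Finset.sum_const, Finset.card_univ, nsmul_eq_mul]
    have h := S.hO j y
    have h0 : (Fintype.card (S.O j y) : ℝ) ≠ 0 := by positivity
    field_simp
  · simp

/-- The marginal of a product behaviour factorises. -/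
lemma marg_prod (gg : ∀ j (y : S.M j), S.O j y → ℝ) (x : InputString S)
    (V : Set S.I) (a : OutputString S x) :
    marg S (fun x a => ∏ j, gg j (x j) (a j)) x V a =
      ∏ j, if j ∈ V then gg j (x j) (a j) else ∑ c, gg j (x j) c := by
  unfold marg
  have key : ∀ b : OutputString S x,
      (if ∀ i ∈ V, b i = a i then ∏ j, gg j (x j) (b j) else 0) =
      ∏ j, (if j ∈ V then (if b j = a j then gg j (x j) (b j) else 0)
            else gg j (x j) (b j)) := by
    intro b
    by_cases h : ∀ i ∈ V, b i = a i
    · rw [if_pos h]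
      refine Finset.prod_congr rfl fun j _ => ?_
      by_cases hj : j ∈ V
      · rw [if_pos hj, if_pos (h j hj)]
      · rw [if_neg hj]
    · rw [if_neg h]
      push_neg at h
      obtain ⟨j, hjV, hj⟩ := h
      refine (Finset.prod_eq_zero (Finset.mem_univ j) ?_).symm
      rw [if_pos hjV, if_neg hj]
  simp_rw [key]
  rw [show (Finset.univ : Finset (OutputString S x)) =
      Fintype.piFinset (fun j => (Finset.univ : Finset (S.O j (x j)))) from
      (Fintype.piFinset_univ).symm,
    ← Finset.prod_univ_sum (t := fun j => (Finset.univ : Finset (S.O j (x j))))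
      (f := fun j c => if j ∈ V then (if c = a j then gg j (x j) c else 0)
            else gg j (x j) c)]
  refine Finset.prod_congr rfl fun j _ => ?_
  by_cases hj : j ∈ V
  · simp [hj]
  · simp [hj]

/-- The separating behaviour. -/
def pSep (i : S.I) (m : S.M i) : Behaviour S :=
  fun x a => ∏ j, g S i m j (x j) (a j)

lemma marg_pSep (i : S.I) (m : S.M i) (x : InputString S) (V : Set S.I)
    (a : OutputString S x) :
    marg S (pSep S i m) x V a = ∏ j, if j ∈ V then g S i m j (x j) (a j) else 1 := by
  rw [show pSep S i m = fun x a => ∏ j, g S i m j (x j) (a j) from rfl,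
    marg_prod]
  exact Finset.prod_congr rfl fun j _ => by rw [g_sum]

lemma pSep_isBehaviour (i : S.I) (m : S.M i) : IsBehaviour S (pSep S i m) := by
  constructor
  · intro x a
    exact Finset.prod_nonneg fun j _ => g_nonneg S i m j (x j) (a j)
  · intro x
    have a0 : OutputString S x := fun j => Classical.arbitrary _
    have h1 : marg S (pSep S i m) x ∅ a0 = ∑ b, pSep S i m x b := by
      unfold marg; simp
    have h2 := marg_pSep S i m x ∅ a0
    simp only [Set.mem_empty_iff_false, if_false, Finset.prod_const_one] at h2
    rw [← h1, h2]

lemma pSep_mem (i : S.I) (m : S.M i) (M₂ : ∀ j, Set (S.M j)) (h2 : m ∉ M₂ i) :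
    pSep S i m ∈ PPset S M₂ := by
  refine ⟨pSep_isBehaviour S i m, fun x V hV a => ?_⟩
  rw [marg_pSep]
  refine Finset.prod_induction _ (fun r => r = 0 ∨ r = 1)
    (fun u v hu hv => ?_) (Or.inr rfl) (fun j _ => ?_)
  · rcases hu with h | h <;> rcases hv with h' | h' <;> simp [h, h']
  · by_cases hj : j ∈ V
    · rw [if_pos hj]
      have hne : (⟨j, x j⟩ : Σ k, S.M k) ≠ ⟨i, m⟩ := by
        intro h
        rw [Sigma.mk.inj_iff] at h
        obtain ⟨rfl, h'⟩ := h
        rw [heq_iff_eq] at h'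
        exact h2 (h' ▸ hV hj)
      unfold g
      rw [if_neg hne]
      split <;> simp
    · rw [if_neg hj]; exact Or.inr rfl

lemma pSep_not_mem (i : S.I) (m : S.M i) (M₁ : ∀ j, Set (S.M j)) (h1 : m ∈ M₁ i) :
    pSep S i m ∉ PPset S M₁ := by
  rintro ⟨-, hpp⟩
  set x : InputString S := Function.update (fun j => (S.hM j).some) i m with hx
  have hxi : x i = m := Function.update_self i m _
  have a0 : OutputString S x := fun j => Classical.arbitrary _
  have hV : ({i} : Set S.I) ⊆ Fup S M₁ x := by
    intro j hj
    rcases hj with rfl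
    show x j ∈ M₁ j
    rw [hxi]; exact h1
  have := hpp x {i} hV a0
  rw [marg_pSep] at this
  have hval : (∏ j, if j ∈ ({i} : Set S.I) then g S i m j (x j) (a0 j) else 1) =
      g S i m i (x i) (a0 i) := by
    rw [Finset.prod_eq_single i (fun j _ hj => by
      rw [if_neg (by simpa using hj)]) (fun h => absurd (Finset.mem_univ i) h)]
    rw [if_pos (Set.mem_singleton i)]
  erw [hval] at this
  have hsig : (⟨i, x i⟩ : Σ k, S.M k) = ⟨i, m⟩ := congrArg (Sigma.mk i) hxi
  unfold g at this
  rw [if_pos hsig] at this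
  have hc := S.hO i (x i)
  have hc' : (2 : ℝ) ≤ (Fintype.card (S.O i (x i)) : ℝ) := by exact_mod_cast hc
  rcases this with h | h
  · rw [inv_eq_zero] at h
    rw [h] at hc'; norm_num at hc'
  · rw [inv_eq_one] at h
    rw [h] at hc'; norm_num at hc'

end PPaux

/-- Monotonicity and separation for the partially predictable sets: (i) if
`M''_i ⊆ M'_i` for all `i` then `PP(S, M') ⊆ PP(S, M'')`; (ii) `PP(S, M') = PP(S, M'')`
if and only if `M'_i = M''_i` for all `i`. -/
theorem pp_mono_and_eq_iff (S : Scenario) [Nonempty S.I]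
    (M' M'' : ∀ i, Set (S.M i)) :
    ((∀ i, M'' i ⊆ M' i) → PPset S M' ⊆ PPset S M'') ∧
    (PPset S M' = PPset S M'' ↔ ∀ i, M' i = M'' i) := by
  have mono : ∀ (A B : ∀ i, Set (S.M i)), (∀ i, B i ⊆ A i) → PPset S A ⊆ PPset S B := by
    intro A B hAB p hp
    refine ⟨hp.1, fun x V hV a => ?_⟩
    refine hp.2 x V (fun j hj => ?_) a
    exact hAB j (hV hj)
  refine ⟨mono M' M'', ?_, fun h => by
    have : M' = M'' := funext h
    rw [this]⟩
  intro heq i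
  refine Set.Subset.antisymm (fun m hm => ?_) (fun m hm => ?_)
  · by_contra hm'
    exact PPaux.pSep_not_mem S i m M' hm (heq ▸ PPaux.pSep_mem S i m M'' hm')
  · by_contra hm'
    exact PPaux.pSep_not_mem S i m M'' hm (heq ▸ PPaux.pSep_mem S i m M' hm')


end
end

section
/- Let S = (I, M, O) be a correlation scenario and let 𝓘 be a nonempty collection of subsets of I; for I' ∈ 𝓘 let M^{I'} be the collection of input subsets with M^{I'}_i = M_i if i ∈ I' and M^{I'}_i = ∅ otherwise. Then conv( ⋃_{I'∈𝓘} PD(S, M^{I'}) ) is a convex polytope, and its set of extreme points is exactly the union of the extreme points of the individual polytopes: Ext( conv( ⋃_{I'∈𝓘} PD(S, M^{I'}) ) ) = ⋃_{I'∈𝓘} Ext( PD(S, M^{I'}) ). -/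
open scoped Classical
open MeasureTheory

noncomputable section

/-- The all-or-nothing collection of input sets determined by a subset `I'` of parties:
`M^{I'}_i = M_i` if `i ∈ I'` and `M^{I'}_i = ∅` otherwise. -/
def MColl (S : Scenario) (I' : Set S.I) : ∀ i, Set (S.M i) :=
  fun i => if i ∈ I' then (Set.univ : Set (S.M i)) else (∅ : Set (S.M i))


namespace AuxPD

open Set

variable {E : Type*} [AddCommGroup E] [Module ℝ E]

/-- Polyhedra have finitely many extreme points. -/
theorem extremePoints_finite_of_polyhedron {J : Type*} [Finite J]
    (φ : J → E →ₗ[ℝ] ℝ) (c : J → ℝ) :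
    (Set.extremePoints ℝ {x : E | ∀ j, φ j x ≤ c j}).Finite := by
  cases nonempty_fintype J
  set s := {x : E | ∀ j, φ j x ≤ c j} with hs
  have hinj : Set.InjOn (fun p => {j | φ j p = c j}) (Set.extremePoints ℝ s) := by
    intro p hp q hq hfeq
    by_contra hne
    simp only at hfeq
    have hTq : ∀ j, φ j p = c j → φ j q = c j := fun j hj => by
      have h1 : j ∈ {j | φ j p = c j} := hj
      rw [hfeq] at h1; exact h1
    set A : Finset J := Finset.univ.filter (fun j => ¬ φ j p = c j ∧ 0 < φ j (p - q)) with hA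
    set t : ℝ := if hAe : A.Nonempty then
        min 1 (A.inf' hAe fun j => (c j - φ j p) / φ j (p - q)) else 1 with ht
    have ht0 : 0 < t := by
      rw [ht]; split
      · rename_i hAe
        refine lt_min one_pos ?_
        rw [Finset.lt_inf'_iff]
        intro j hj
        rw [hA, Finset.mem_filter] at hj
        have h1 : φ j p < c j := lt_of_le_of_ne (hp.1 j) hj.2.1
        exact div_pos (by linarith) hj.2.2
      · exact one_pos
    have htle : ∀ j ∈ A, t ≤ (c j - φ j p) / φ j (p - q) := by
      intro j hj
      have hAe : A.Nonempty := ⟨j, hj⟩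
      rw [ht, dif_pos hAe]
      exact le_trans (min_le_right _ _) (Finset.inf'_le _ hj)
    set r : E := p + t • (p - q) with hr
    have hkey : ∀ j, φ j r = φ j p + t * φ j (p - q) := by
      intro j; rw [hr]; simp [map_add, _root_.map_smul, smul_eq_mul]
    have hrs : r ∈ s := by
      intro j
      rw [hkey j]
      by_cases hact : φ j p = c j
      · have hq' : φ j q = c j := hTq j hact
        have : φ j (p - q) = 0 := by rw [map_sub, hact, hq', sub_self]
        rw [this]; simp [hact]
      · have h1 : φ j p < c j := lt_of_le_of_ne (hp.1 j) hact
        by_cases h2 : 0 < φ j (p - q)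
        · have hjA : j ∈ A := by rw [hA, Finset.mem_filter]; exact ⟨Finset.mem_univ _, hact, h2⟩
          have := htle j hjA
          have h3 : t * φ j (p - q) ≤ c j - φ j p := by
            rw [← le_div_iff₀ h2]; exact this
          linarith
        · push_neg at h2
          nlinarith
    have hseg : p ∈ openSegment ℝ q r := by
      have h1t : (0:ℝ) < 1 + t := by linarith
      refine ⟨t / (1 + t), 1 / (1 + t), by positivity, by positivity,
        by rw [← add_div, add_comm, div_self h1t.ne'], ?_⟩
      rw [hr]
      match_scalars <;> field_simp <;> ring
    have := hp.2 hq.1 hrs hseg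
    exact hne this.symm
  exact Set.Finite.of_finite_image (Set.Finite.subset Set.finite_univ (Set.subset_univ _)) hinj

variable (S : Scenario)

noncomputable instance : Fintype (InputString S) := inferInstance

noncomputable instance (x : InputString S) : Fintype (OutputString S x) := inferInstance

/-- Evaluation at a coordinate, as a linear map. -/
def evL (x : InputString S) (a : OutputString S x) : Behaviour S →ₗ[ℝ] ℝ :=
  (LinearMap.proj a).comp
    (LinearMap.proj (R := ℝ) (φ := fun x : InputString S => OutputString S x → ℝ) x)

@[simp] lemma evL_apply (x : InputString S) (a : OutputString S x) (p : Behaviour S) :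
    evL S x a p = p x a := rfl

/-- The marginal, as a linear map. -/
def margL (x : InputString S) (V : Set S.I) (a : OutputString S x) : Behaviour S →ₗ[ℝ] ℝ :=
  ∑ b : OutputString S x, if ∀ i ∈ V, b i = a i then evL S x b else 0

lemma margL_apply (x : InputString S) (V : Set S.I) (a : OutputString S x) (p : Behaviour S) :
    margL S x V a p = marg S p x V a := by
  unfold margL marg
  rw [LinearMap.sum_apply]
  refine Finset.sum_congr rfl fun b _ => ?_
  by_cases h : ∀ i ∈ V, b i = a i
  · rw [if_pos h, if_pos h]; rfl
  · rw [if_neg h, if_neg h]; rfl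

/-- Normalization, as a linear map. -/
def sumL (x : InputString S) : Behaviour S →ₗ[ℝ] ℝ := ∑ a : OutputString S x, evL S x a

lemma sumL_apply (x : InputString S) (p : Behaviour S) : sumL S x p = ∑ a, p x a := by
  unfold sumL
  rw [LinearMap.sum_apply]
  exact Finset.sum_congr rfl fun a _ => by simp

/-- Index type for the no-signalling constraints. -/
def NSIdx := Σ i : S.I, Σ x : InputString S, Σ m : S.M i,
  OutputString S x × OutputString S (Function.update x i m)

/-- Index type for all linear constraints cutting out `NS(S)`. -/
def ConIdx := (Σ x : InputString S, OutputString S x) ⊕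
  (InputString S ⊕ InputString S) ⊕ (NSIdx S ⊕ NSIdx S)

instance : Finite (NSIdx S) := by unfold NSIdx; infer_instance

instance : Finite (ConIdx S) := by unfold ConIdx; infer_instance

/-- The linear functional of a single no-signalling constraint. -/
def nsL (j : NSIdx S) : Behaviour S →ₗ[ℝ] ℝ :=
  if (∀ k, k ≠ j.1 → HEq (j.2.2.2.1 k) (j.2.2.2.2 k)) then
    margL S j.2.1 {j.1}ᶜ j.2.2.2.1 -
      margL S (Function.update j.2.1 j.1 j.2.2.1) {j.1}ᶜ j.2.2.2.2
  else 0

def conL : ConIdx S → Behaviour S →ₗ[ℝ] ℝ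
  | .inl ⟨x, a⟩ => -evL S x a
  | .inr (.inl (.inl x)) => sumL S x
  | .inr (.inl (.inr x)) => -sumL S x
  | .inr (.inr (.inl j)) => nsL S j
  | .inr (.inr (.inr j)) => -nsL S j

def conC : ConIdx S → ℝ
  | .inl _ => 0
  | .inr (.inl (.inl _)) => 1
  | .inr (.inl (.inr _)) => -1
  | .inr (.inr _) => 0

lemma NSset_eq_poly : NSset S = {p | ∀ j, conL S j p ≤ conC S j} := by
  ext p
  constructor
  · rintro ⟨⟨hpos, hsum⟩, hns⟩ j
    match j with
    | .inl ⟨x, a⟩ => simpa [conL, conC] using hpos x a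
    | .inr (.inl (.inl x)) => simp [conL, conC, sumL_apply, hsum x]
    | .inr (.inl (.inr x)) => simp [conL, conC, sumL_apply, hsum x]
    | .inr (.inr (.inl ⟨i, x, m, a, a'⟩)) =>
        simp only [conL, conC, nsL]
        split
        · rename_i h
          rw [LinearMap.sub_apply, margL_apply, margL_apply,
            hns i x m a a' h, sub_self]
        · simp
    | .inr (.inr (.inr ⟨i, x, m, a, a'⟩)) =>
        simp only [conL, conC, nsL]
        split
        · rename_i h
          rw [LinearMap.neg_apply, LinearMap.sub_apply, margL_apply, margL_apply,
            hns i x m a a' h, sub_self, neg_zero]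
        · simp
  · intro h
    refine ⟨⟨fun x a => ?_, fun x => ?_⟩, fun i x m a a' hh => ?_⟩
    · have := h (.inl ⟨x, a⟩)
      simpa [conL, conC] using this
    · have h1 := h (.inr (.inl (.inl x)))
      have h2 := h (.inr (.inl (.inr x)))
      simp only [conL, conC, sumL_apply, LinearMap.neg_apply] at h1 h2
      linarith
    · have h1 := h (.inr (.inr (.inl ⟨i, x, m, a, a'⟩)))
      have h2 := h (.inr (.inr (.inr ⟨i, x, m, a, a'⟩)))
      simp only [conL, conC, nsL] at h1 h2
      rw [if_pos hh] at h1 h2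
      rw [LinearMap.sub_apply, margL_apply, margL_apply] at h1
      rw [LinearMap.neg_apply, LinearMap.sub_apply, margL_apply, margL_apply] at h2
      linarith

lemma NSset_inter : NSset S = ⋂ j, {p : Behaviour S | conL S j p ≤ conC S j} := by
  rw [NSset_eq_poly]; ext p; simp [Set.mem_iInter]

lemma NSset_convex : Convex ℝ (NSset S) := by
  rw [NSset_inter]
  exact convex_iInter fun j => convex_halfSpace_le (LinearMap.isLinear _) _

lemma NSset_extfin : (Set.extremePoints ℝ (NSset S)).Finite := by
  rw [NSset_eq_poly]
  exact extremePoints_finite_of_polyhedron _ _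

lemma NSset_compact : IsCompact (NSset S) := by
  have hclosed : IsClosed (NSset S) := by
    rw [NSset_inter]
    exact isClosed_iInter fun j =>
      IsClosed.preimage (conL S j).continuous_of_finiteDimensional isClosed_Iic
  have hbox : IsCompact {p : Behaviour S | ∀ x a, p x a ∈ Set.Icc (0:ℝ) 1} := by
    have heq : {p : Behaviour S | ∀ x a, p x a ∈ Set.Icc (0:ℝ) 1} =
        Set.pi Set.univ (fun x => Set.pi Set.univ fun _ => Set.Icc (0:ℝ) 1) := by
      ext p
      simp only [Set.mem_setOf_eq, Set.mem_pi, Set.mem_univ, true_implies]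
    rw [heq]
    exact isCompact_univ_pi fun x => isCompact_univ_pi fun a => isCompact_Icc
  apply hbox.of_isClosed_subset hclosed
  rintro p ⟨⟨hpos, hsum⟩, -⟩ x a
  refine ⟨hpos x a, ?_⟩
  rw [← hsum x]
  exact Finset.single_le_sum (fun b _ => hpos x b) (Finset.mem_univ a)

lemma NSset_eq_conv : NSset S = convexHull ℝ (Set.extremePoints ℝ (NSset S)) := by
  have h := closure_convexHull_extremePoints (NSset_compact S) (NSset_convex S)
  rw [((NSset_extfin S).isClosed_convexHull ℝ).closure_eq] at h
  exact h.symm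

variable {S}

lemma Fup_MColl (I' : Set S.I) (x : InputString S) : Fup S (MColl S I') x = I' := by
  ext i; by_cases h : i ∈ I' <;> simp [Fup, MColl, h]

lemma exists_det {I' : Set S.I} {p : Behaviour S} (hp : p ∈ PPNS S (MColl S I'))
    (x : InputString S) {i : S.I} (hi : i ∈ I') :
    ∃ o : S.O i (x i), ∀ b : OutputString S x, b i ≠ o → p x b = 0 := by
  obtain ⟨hb, hns, hpp⟩ := hp
  have hsub : ({i} : Set S.I) ⊆ Fup S (MColl S I') x := by
    rw [Fup_MColl]; exact Set.singleton_subset_iff.2 hi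
  by_cases hex : ∃ a : OutputString S x, marg S p x {i} a = 1
  · obtain ⟨a, ha⟩ := hex
    refine ⟨a i, fun b hbne => ?_⟩
    have h1 : ∑ b : OutputString S x,
        (p x b - if ∀ j ∈ ({i} : Set S.I), b j = a j then p x b else 0) = 0 := by
      rw [Finset.sum_sub_distrib, hb.2 x]
      unfold marg at ha
      convert sub_self (1:ℝ) using 2; convert ha
    have h2 : ∀ b ∈ Finset.univ, (0:ℝ) ≤
        p x b - (if ∀ j ∈ ({i} : Set S.I), b j = a j then p x b else 0) := by
      intro b _
      split
      · simp
      · simpa using hb.1 x b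
    have h3 := (Finset.sum_eq_zero_iff_of_nonneg h2).1 h1 b (Finset.mem_univ b)
    rw [if_neg] at h3
    · linarith
    · intro hcon; exact hbne (hcon i (Set.mem_singleton i))
  · exfalso
    have hall : ∀ a : OutputString S x, marg S p x {i} a = 0 := fun a =>
      (hpp x {i} hsub a).resolve_right fun h => hex ⟨a, h⟩
    obtain ⟨a₀⟩ := (inferInstance : Nonempty (OutputString S x))
    have hsum : ∑ o : S.O i (x i), marg S p x {i} (Function.update a₀ i o) = 1 := by
      unfold marg
      rw [Finset.sum_comm]
      have hterm : ∀ b : OutputString S x, (∑ o : S.O i (x i),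
          if ∀ j ∈ ({i} : Set S.I), b j = Function.update a₀ i o j then p x b else 0)
          = p x b := by
        intro b
        have hcond : ∀ o : S.O i (x i),
            (∀ j ∈ ({i} : Set S.I), b j = Function.update a₀ i o j) ↔ b i = o := by
          intro o
          constructor
          · intro h
            have := h i (Set.mem_singleton i)
            rwa [Function.update_self] at this
          · intro h j hj
            rw [Set.mem_singleton_iff] at hj
            subst hj
            rwa [Function.update_self]
        have : (∑ o : S.O i (x i),
            if ∀ j ∈ ({i} : Set S.I), b j = Function.update a₀ i o j then p x b else 0)
            = ∑ o : S.O i (x i), if b i = o then p x b else 0 :=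
          Finset.sum_congr rfl fun o _ => by rw [if_congr (hcond o) rfl rfl]
        rw [this, Finset.sum_ite_eq]
        simp
      convert (Finset.sum_congr (s₁ := Finset.univ) rfl fun b _ => hterm b).trans (hb.2 x)
    rw [Finset.sum_congr rfl fun o _ => hall _] at hsum
    simp at hsum

lemma partpred_of_zeros {I' : Set S.I} {q : Behaviour S} (hq : IsBehaviour S q)
    (h : ∀ x : InputString S, ∀ i ∈ I',
      ∃ o : S.O i (x i), ∀ b : OutputString S x, b i ≠ o → q x b = 0) :
    PartPredictable S (MColl S I') q := by
  intro x V hV a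
  rw [Fup_MColl] at hV
  choose o ho using h x
  by_cases hca : ∀ i, ∀ hi : i ∈ V, a i = o i (hV hi)
  · right
    unfold marg
    rw [← hq.2 x]
    refine Finset.sum_congr rfl fun b _ => ?_
    by_cases hagree : ∀ i ∈ V, b i = a i
    · rw [if_pos hagree]
    · rw [if_neg hagree]
      push_neg at hagree
      obtain ⟨i, hiV, hbi⟩ := hagree
      symm
      apply ho i (hV hiV) b
      intro hco
      exact hbi (by rw [hco, hca i hiV])
  · left
    push_neg at hca
    obtain ⟨i, hiV, hai⟩ := hca
    unfold marg
    apply Finset.sum_eq_zero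
    intro b _
    split
    · rename_i hagree
      apply ho i (hV hiV) b
      rw [hagree i hiV]
      exact hai
    · rfl

lemma PPNS_of_zeros {I' : Set S.I} {p q : Behaviour S} (hp : p ∈ PPNS S (MColl S I'))
    (hq : q ∈ NSset S) (hz : ∀ x b, p x b = 0 → q x b = 0) :
    q ∈ PPNS S (MColl S I') := by
  refine ⟨hq.1, hq.2, partpred_of_zeros hq.1 fun x i hi => ?_⟩
  obtain ⟨o, ho⟩ := exists_det hp x hi
  exact ⟨o, fun b hb => hz x b (ho b hb)⟩

lemma PPNS_sub_NS (I' : Set S.I) : PPNS S (MColl S I') ⊆ NSset S :=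
  fun p hp => ⟨hp.1, hp.2.1⟩

lemma PPNS_openSegment {I' : Set S.I} {p q r : Behaviour S} (hp : p ∈ PPNS S (MColl S I'))
    (hq : q ∈ NSset S) (hr : r ∈ NSset S) (hseg : p ∈ openSegment ℝ q r) :
    q ∈ PPNS S (MColl S I') ∧ r ∈ PPNS S (MColl S I') := by
  obtain ⟨α, β, hα, hβ, hab, hcomb⟩ := hseg
  have hz : ∀ x b, p x b = 0 → q x b = 0 ∧ r x b = 0 := by
    intro x b h0
    have hc : α * q x b + β * r x b = 0 := by
      have h := congrFun (congrFun hcomb x) b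
      simp only [Pi.add_apply, Pi.smul_apply, smul_eq_mul] at h
      rw [h0] at h
      exact h
    have hq0 : 0 ≤ q x b := hq.1.1 x b
    have hr0 : 0 ≤ r x b := hr.1.1 x b
    constructor <;> nlinarith
  exact ⟨PPNS_of_zeros hp hq fun x b h0 => (hz x b h0).1,
    PPNS_of_zeros hp hr fun x b h0 => (hz x b h0).2⟩

lemma PPNS_comb {I' : Set S.I} {p : Behaviour S} (hp : p ∈ PPNS S (MColl S I'))
    {ι : Type*} {t : Finset ι} {w : ι → ℝ} {z : ι → Behaviour S}
    (hw : ∀ k ∈ t, 0 < w k) (hz : ∀ k ∈ t, z k ∈ NSset S)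
    (hcomb : ∑ k ∈ t, w k • z k = p) :
    ∀ k ∈ t, z k ∈ PPNS S (MColl S I') := by
  intro k hk
  apply PPNS_of_zeros hp (hz k hk)
  intro x b h0
  have h1 : ∑ j ∈ t, w j * z j x b = 0 := by
    have h := congrFun (congrFun hcomb x) b
    rw [h0] at h
    rw [← h]
    rw [Finset.sum_apply, Finset.sum_apply]
    exact Finset.sum_congr rfl fun j _ => by simp [smul_eq_mul]
  have h2 : ∀ j ∈ t, (0:ℝ) ≤ w j * z j x b :=
    fun j hj => mul_nonneg (hw j hj).le ((hz j hj).1.1 x b)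
  have h3 := (Finset.sum_eq_zero_iff_of_nonneg h2).1 h1 k hk
  exact (mul_eq_zero.1 h3).resolve_left (hw k hk).ne'

lemma PPNS_sub_conv (I' : Set S.I) : PPNS S (MColl S I') ⊆
    convexHull ℝ (PPNS S (MColl S I') ∩ Set.extremePoints ℝ (NSset S)) := by
  intro p hp
  have hpNS : p ∈ NSset S := PPNS_sub_NS I' hp
  rw [NSset_eq_conv S, convexHull_eq] at hpNS
  obtain ⟨ι, t, w, z, hw, hsum, hz, hcm⟩ := hpNS
  classical
  set t' := t.filter (fun k => 0 < w k) with ht'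
  have hwpos : ∀ k ∈ t', 0 < w k := fun k hk => (Finset.mem_filter.1 hk).2
  have hsum' : ∑ k ∈ t', w k = 1 := by
    rw [ht', Finset.sum_filter_of_ne fun k hk hne => lt_of_le_of_ne (hw k hk) (Ne.symm hne)]
    exact hsum
  have hcombt : ∑ k ∈ t, w k • z k = p := by
    rw [← Finset.centerMass_eq_of_sum_1 _ _ hsum]
    exact hcm
  have hcomb' : ∑ k ∈ t', w k • z k = p := by
    rw [ht', Finset.sum_filter_of_ne, hcombt]
    intro k hk hne
    rcases lt_of_le_of_ne (hw k hk) (fun h => hne (by rw [← h, zero_smul])) with h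
    exact h
  have hzNS : ∀ k ∈ t', z k ∈ NSset S := fun k hk =>
    extremePoints_subset (hz k (Finset.mem_filter.1 hk).1)
  have hzP : ∀ k ∈ t', z k ∈ PPNS S (MColl S I') := PPNS_comb hp hwpos hzNS hcomb'
  rw [convexHull_eq]
  refine ⟨ι, t', w, z, fun k hk => (hwpos k hk).le, hsum',
    fun k hk => ⟨hzP k hk, hz k (Finset.mem_filter.1 hk).1⟩, ?_⟩
  rw [Finset.centerMass_eq_of_sum_1 _ _ hsum']
  exact hcomb'

lemma PD_eq (I' : Set S.I) : PD S (MColl S I') =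
    convexHull ℝ (PPNS S (MColl S I') ∩ Set.extremePoints ℝ (NSset S)) := by
  refine Set.Subset.antisymm ?_ (convexHull_mono Set.inter_subset_left)
  exact convexHull_min (PPNS_sub_conv I') (convex_convexHull ℝ _)

end AuxPD

/-- The convex hull of a union of partially deterministic polytopes `PD(S, M^{I'})`,
`I' ∈ 𝓘`, is a convex polytope, and its extreme points are exactly the union of the extreme
points of the individual polytopes. -/
theorem convexHull_union_pd (S : Scenario) [Nonempty S.I]
    (𝓘 : Set (Set S.I)) (h𝓘 : 𝓘.Nonempty) :
    (∃ F : Set (Behaviour S), F.Finite ∧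
      convexHull ℝ (⋃ I' ∈ 𝓘, PD S (MColl S I')) = convexHull ℝ F) ∧
    Set.extremePoints ℝ (convexHull ℝ (⋃ I' ∈ 𝓘, PD S (MColl S I'))) =
      ⋃ I' ∈ 𝓘, Set.extremePoints ℝ (PD S (MColl S I')) := by
  classical
  have hPDsubNS : ∀ I' : Set S.I, PD S (MColl S I') ⊆ NSset S := fun I' =>
    convexHull_min (AuxPD.PPNS_sub_NS I') (AuxPD.NSset_convex S)
  have hKsub : convexHull ℝ (⋃ I' ∈ 𝓘, PD S (MColl S I')) ⊆ NSset S :=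
    convexHull_min (Set.iUnion₂_subset fun j _ => hPDsubNS j) (AuxPD.NSset_convex S)
  have hPDK : ∀ I' ∈ 𝓘, PD S (MColl S I') ⊆ convexHull ℝ (⋃ I' ∈ 𝓘, PD S (MColl S I')) :=
    fun j hj => by
      refine Set.Subset.trans ?_ (subset_convexHull ℝ _)
      exact Set.subset_iUnion₂ (s := fun I' _ => PD S (MColl S I')) j hj
  constructor
  · refine ⟨⋃ I' ∈ 𝓘, (PPNS S (MColl S I') ∩ Set.extremePoints ℝ (NSset S)), ?_, ?_⟩
    · exact (AuxPD.NSset_extfin S).subset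
        (Set.iUnion₂_subset fun j _ => Set.inter_subset_right)
    · have h1 : (⋃ I' ∈ 𝓘, PD S (MColl S I')) = ⋃ I' ∈ 𝓘,
          convexHull ℝ (PPNS S (MColl S I') ∩ Set.extremePoints ℝ (NSset S)) :=
        Set.iUnion₂_congr fun j _ => AuxPD.PD_eq j
      rw [h1]
      refine Set.Subset.antisymm ?_
        (convexHull_mono (Set.iUnion₂_mono fun j _ => subset_convexHull ℝ _))
      refine convexHull_min (Set.iUnion₂_subset fun j hj => ?_) (convex_convexHull ℝ _)
      exact convexHull_mono (Set.subset_iUnion₂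
        (s := fun I' _ => PPNS S (MColl S I') ∩ Set.extremePoints ℝ (NSset S)) j hj)
  · ext p
    constructor
    · intro hp
      have hpA : p ∈ ⋃ I' ∈ 𝓘, PD S (MColl S I') := extremePoints_convexHull_subset hp
      rw [Set.mem_iUnion₂] at hpA
      obtain ⟨j, hj, hpj⟩ := hpA
      exact Set.mem_iUnion₂.2 ⟨j, hj,
        inter_extremePoints_subset_extremePoints_of_subset (hPDK j hj) ⟨hpj, hp⟩⟩
    · intro hp
      rw [Set.mem_iUnion₂] at hp
      obtain ⟨j, hj, hp⟩ := hp
      have hpP : p ∈ PPNS S (MColl S j) := extremePoints_convexHull_subset hp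
      refine ⟨hPDK j hj (extremePoints_subset hp), ?_⟩
      intro q hq r hr hseg
      have hq' : q ∈ NSset S := hKsub hq
      have hr' : r ∈ NSset S := hKsub hr
      obtain ⟨hqP, hrP⟩ := AuxPD.PPNS_openSegment hpP hq' hr' hseg
      exact hp.2 (subset_convexHull ℝ _ hqP) (subset_convexHull ℝ _ hrP) hseg

end
end
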